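/- For independent T and C with Y = min(T,C) and Δ = 1{T ≤ C}, and any bounded measurable function h, E[ Δ·1{Y ≤ t₀}·h(Y)/G(Y) ] = E[ 1{T ≤ t₀}·h(T) ], provided G(t) = P(C ≥ t) > 0 for all t ≤ t₀ in the support of T. -/

import Mathlib

open MeasureTheory ProbabilityTheory Set

/-! By independence the joint law of `(T, C)` is the product of the marginals, so by Fubini
`E[1{T ≤ C} φ(T)] = E[φ(T) G(T)]` for `G(t) = P(C ≥ t)`. With `φ(t) = 1{t ≤ t₀} h(t) / G(t)`
the weight `G(T)` cancels almost surely thanks to the positivity assumption. -/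

section

variable {Ω : Type*} [MeasurableSpace Ω] {μ : Measure Ω}

noncomputable def survivalFun (μ : Measure Ω) (C : Ω → ℝ) (t : ℝ) : ℝ :=
  μ.real {ω | t ≤ C ω}

theorem measureReal_map_Ici {C : Ω → ℝ} (hC : AEMeasurable C μ) (t : ℝ) :
    (μ.map C).real (Ici t) = survivalFun μ C t :=
  map_measureReal_apply_of_aemeasurable hC measurableSet_Ici

variable [IsFiniteMeasure μ]

theorem antitone_survivalFun (C : Ω → ℝ) : Antitone (survivalFun μ C) :=
  fun _ _ hst => measureReal_mono fun _ hω => hst.trans hω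

theorem measurable_survivalFun (C : Ω → ℝ) : Measurable (survivalFun μ C) :=
  (antitone_survivalFun C).measurable

end

theorem measurable_ite_fst_le_snd {φ : ℝ → ℝ} (hφ : Measurable φ) :
    Measurable fun p : ℝ × ℝ => if p.1 ≤ p.2 then φ p.1 else 0 :=
  (hφ.comp measurable_fst).ite (measurableSet_le measurable_fst measurable_snd) measurable_const

theorem integral_prod_ite_le {ν₁ ν₂ : Measure ℝ} [SFinite ν₁] [IsFiniteMeasure ν₂]
    {φ : ℝ → ℝ} (hφ : Measurable φ) (hint : Integrable (fun t => φ t * ν₂.real (Ici t)) ν₁) :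
    ∫ p, (if p.1 ≤ p.2 then φ p.1 else 0) ∂(ν₁.prod ν₂) = ∫ t, φ t * ν₂.real (Ici t) ∂ν₁ := by
  set f : ℝ × ℝ → ℝ := fun p => if p.1 ≤ p.2 then φ p.1 else 0
  have hsection : ∀ t c, f (t, c) = (Ici t).indicator (fun _ => φ t) c := by
    intro t c
    simp [f, indicator_apply]
  have hfmeas : Measurable f := measurable_ite_fst_le_snd hφ
  have hf : Integrable f (ν₁.prod ν₂) := by
    rw [integrable_prod_iff hfmeas.aestronglyMeasurable]
    refine ⟨ae_of_all _ fun t => ?_, hint.norm.congr (ae_of_all _ fun t => ?_)⟩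
    · simp only [hsection]
      exact (integrable_const _).indicator measurableSet_Ici
    · simp only [hsection, norm_indicator_eq_indicator_norm,
        integral_indicator_const _ measurableSet_Ici, smul_eq_mul, norm_mul,
        Real.norm_of_nonneg measureReal_nonneg, mul_comm]
  rw [integral_prod f hf]
  congr with t
  simp only [hsection, integral_indicator_const _ measurableSet_Ici, smul_eq_mul, mul_comm]

theorem integral_ite_le_of_indepFun {Ω : Type*} [MeasurableSpace Ω] {μ : Measure Ω}
    [IsFiniteMeasure μ] {T C : Ω → ℝ} (hT : AEMeasurable T μ) (hC : AEMeasurable C μ)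
    (hindep : IndepFun T C μ) {φ : ℝ → ℝ} (hφ : Measurable φ)
    (hint : Integrable (fun ω => φ (T ω) * survivalFun μ C (T ω)) μ) :
    ∫ ω, (if T ω ≤ C ω then φ (T ω) else 0) ∂μ
      = ∫ ω, φ (T ω) * survivalFun μ C (T ω) ∂μ := by
  have hmeas : Measurable fun t => φ t * survivalFun μ C t :=
    hφ.mul (measurable_survivalFun C)
  have hint' : Integrable (fun t => φ t * (μ.map C).real (Ici t)) (μ.map T) := by
    simp_rw [measureReal_map_Ici hC]
    exact (integrable_map_measure hmeas.aestronglyMeasurable hT).mpr hint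
  have hjoint := (indepFun_iff_map_prod_eq_prod_map_map hT hC).mp hindep
  calc ∫ ω, (if T ω ≤ C ω then φ (T ω) else 0) ∂μ
      = ∫ p, (if p.1 ≤ p.2 then φ p.1 else 0) ∂(μ.map fun ω => (T ω, C ω)) :=
        (integral_map (hT.prodMk hC) (measurable_ite_fst_le_snd hφ).aestronglyMeasurable).symm
    _ = ∫ t, φ t * (μ.map C).real (Ici t) ∂(μ.map T) := by
        rw [hjoint, integral_prod_ite_le hφ hint']
    _ = ∫ ω, φ (T ω) * survivalFun μ C (T ω) ∂μ := by
        simp_rw [measureReal_map_Ici hC]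
        exact integral_map hT hmeas.aestronglyMeasurable

theorem stmt14_general {Ω : Type*} [MeasurableSpace Ω] (μ : Measure Ω) [IsProbabilityMeasure μ]
    (T C : Ω → ℝ) (hT : Measurable T) (hC : Measurable C)
    (hindep : IndepFun T C μ)
    (Y : Ω → ℝ) (hY : ∀ ω, Y ω = min (T ω) (C ω))
    (G : ℝ → ℝ) (hG : ∀ t, G t = (μ {ω | t ≤ C ω}).toReal)
    (t₀ : ℝ)
    (h : ℝ → ℝ) (hmeas : Measurable h) (M : ℝ) (hbdd : ∀ x, |h x| ≤ M)
    (hpos : ∀ᵐ ω ∂μ, T ω ≤ t₀ → 0 < G (T ω)) :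
    ∫ ω, (if T ω ≤ C ω ∧ Y ω ≤ t₀ then h (Y ω) / G (Y ω) else 0) ∂μ
      = ∫ ω, (if T ω ≤ t₀ then h (T ω) else 0) ∂μ := by
  obtain rfl : G = survivalFun μ C := funext hG
  set φ : ℝ → ℝ := fun t => if t ≤ t₀ then h t / survivalFun μ C t else 0
  have hφ : Measurable φ :=
    (hmeas.div (measurable_survivalFun C)).ite measurableSet_Iic measurable_const
  have hlhs : (fun ω => if T ω ≤ C ω ∧ Y ω ≤ t₀ then h (Y ω) / survivalFun μ C (Y ω) else 0)
      = fun ω => if T ω ≤ C ω then φ (T ω) else 0 := by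
    ext ω
    by_cases hTC : T ω ≤ C ω <;> simp [φ, hY, hTC]
  have hcancel : (fun ω => φ (T ω) * survivalFun μ C (T ω))
      =ᵐ[μ] fun ω => if T ω ≤ t₀ then h (T ω) else 0 := by
    filter_upwards [hpos] with ω hω
    by_cases ht : T ω ≤ t₀
    · simp [φ, ht, div_mul_cancel₀ _ (hω ht).ne']
    · simp [φ, ht]
  have hbounded : Integrable (fun ω => if T ω ≤ t₀ then h (T ω) else 0) μ := by
    refine .of_bound ((hmeas.ite measurableSet_Iic measurable_const).comp hT).aestronglyMeasurable
      M (ae_of_all _ fun ω => ?_)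
    split_ifs
    · exact hbdd _
    · simpa using (abs_nonneg _).trans (hbdd 0)
  rw [hlhs, integral_ite_le_of_indepFun hT.aemeasurable hC.aemeasurable hindep hφ
    (hbounded.congr hcancel.symm), integral_congr_ae hcancel]

/-- For independent `T` and `C` with `Y = min(T,C)` and `Δ = 1{T ≤ C}`, and
any bounded measurable `h`, `E[ Δ·1{Y ≤ t₀}·h(Y)/G(Y) ] = E[ 1{T ≤ t₀}·h(T) ]`, provided
`G(t) = P(C ≥ t) > 0` for all `t ≤ t₀` in the support of `T`. -/
theorem stmt14 {Ω : Type*} [MeasurableSpace Ω] (μ : Measure Ω) [IsProbabilityMeasure μ]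
    (T C : Ω → ℝ) (hT : Measurable T) (hC : Measurable C)
    (hTnn : ∀ ω, 0 ≤ T ω) (hCnn : ∀ ω, 0 ≤ C ω)
    (hindep : IndepFun T C μ)
    (Y : Ω → ℝ) (hY : ∀ ω, Y ω = min (T ω) (C ω))
    (G : ℝ → ℝ) (hG : ∀ t, G t = (μ {ω | t ≤ C ω}).toReal)
    (t₀ : ℝ) (ht₀ : 0 < t₀)
    (h : ℝ → ℝ) (hmeas : Measurable h) (M : ℝ) (hbdd : ∀ x, |h x| ≤ M)
    (hpos : ∀ᵐ ω ∂μ, T ω ≤ t₀ → 0 < G (T ω)) :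
    ∫ ω, (if T ω ≤ C ω ∧ Y ω ≤ t₀ then h (Y ω) / G (Y ω) else 0) ∂μ
      = ∫ ω, (if T ω ≤ t₀ then h (T ω) else 0) ∂μ :=
  stmt14_general μ T C hT hC hindep Y hY G hG t₀ h hmeas M hbdd hpos
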